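/- arXiv:2308.03732 — 10 statements merged into one kernel-verified Lean document; each statement's English description precedes it below -/
import Mathlib

section
/- Let u¹,u² range over ℝ and let a, r, b, γ, d, λ, μ be complex constants with a ≠ 0, r ≠ 0, b ≠ 0, λ ≠ 0, μ ≠ 0, b ≠ γ and −b ≠ γ. Define E(u) = exp(2a·u¹ + 2u²/a), f(u) = d·exp(−r·u¹ − u²/r), g(u) = d·exp(−(a+r)(a·r·u¹ + u²)/(a·r))·(γ(λ − μE(u)) + b(λ + μE(u)))/(2bλμ), h(u) = −d·exp(−(a+r)(a·r·u¹ + u²)/(a·r))·(b² − γ²)(λ − μE(u))/(2bλμ), and set ψ₁(u,z) = exp(u¹·z + u²/z)·f(u) for z ≠ 0 and ψ₂(u,z) = g(u) + h(u)/(z − γ) for z ≠ γ. Then for every (u¹,u²) ∈ ℝ² the following three identities hold: ψ₁(u,a) = λ·ψ₂(u,b), ψ₁(u,−a) = μ·ψ₂(u,−b), and ψ₁(u,r) = d. -/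
/- STATEMENT 0: gluing and normalization conditions for the Baker–Akhiezer
section of Example 1 on the reducible spectral curve with two rational
components glued at (a,b) and (−a,−b). -/
theorem stmt_0 (a r b γ d lam mu : ℂ)
    (ha : a ≠ 0) (hr : r ≠ 0) (hb : b ≠ 0) (hlam : lam ≠ 0) (hmu : mu ≠ 0)
    (hbγ : b ≠ γ) (hbγ' : -b ≠ γ)
    (E f g h : ℝ → ℝ → ℂ) (ψ₁ ψ₂ : ℝ → ℝ → ℂ → ℂ)
    (hE : ∀ u1 u2 : ℝ, E u1 u2 = Complex.exp (2 * a * u1 + 2 * (u2 : ℂ) / a))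
    (hf : ∀ u1 u2 : ℝ, f u1 u2 = d * Complex.exp (-r * u1 - (u2 : ℂ) / r))
    (hg : ∀ u1 u2 : ℝ, g u1 u2 =
      d * Complex.exp (-((a + r) * (a * r * u1 + u2)) / (a * r)) *
        (γ * (lam - mu * E u1 u2) + b * (lam + mu * E u1 u2)) / (2 * b * lam * mu))
    (hh : ∀ u1 u2 : ℝ, h u1 u2 =
      -(d * Complex.exp (-((a + r) * (a * r * u1 + u2)) / (a * r)) *
        ((b ^ 2 - γ ^ 2) * (lam - mu * E u1 u2))) / (2 * b * lam * mu))
    (hψ₁ : ∀ (u1 u2 : ℝ) (z : ℂ), z ≠ 0 →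
      ψ₁ u1 u2 z = Complex.exp (u1 * z + u2 / z) * f u1 u2)
    (hψ₂ : ∀ (u1 u2 : ℝ) (z : ℂ), z ≠ γ →
      ψ₂ u1 u2 z = g u1 u2 + h u1 u2 / (z - γ)) :
    ∀ u1 u2 : ℝ,
      ψ₁ u1 u2 a = lam * ψ₂ u1 u2 b ∧
      ψ₁ u1 u2 (-a) = mu * ψ₂ u1 u2 (-b) ∧
      ψ₁ u1 u2 r = d := by
  intro u1 u2
  have hbγd : b - γ ≠ 0 := sub_ne_zero.mpr hbγ
  have hbγd' : (-b : ℂ) - γ ≠ 0 := sub_ne_zero.mpr hbγ'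
  have ha' : (-a : ℂ) ≠ 0 := neg_ne_zero.mpr ha
  set C := Complex.exp (-((a + r) * (a * r * u1 + u2)) / (a * r)) with hC
  set E0 := Complex.exp (2 * a * u1 + 2 * (u2 : ℂ) / a) with hE0
  have key1 : Complex.exp ((u1 : ℂ) * a + u2 / a) * Complex.exp (-r * u1 - (u2 : ℂ) / r)
      = C * E0 := by
    rw [hC, hE0, ← Complex.exp_add, ← Complex.exp_add]
    congr 1
    field_simp
    ring
  have key2 : Complex.exp ((u1 : ℂ) * (-a) + u2 / (-a)) *
      Complex.exp (-r * u1 - (u2 : ℂ) / r) = C := by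
    rw [hC, ← Complex.exp_add]
    congr 1
    field_simp
    ring
  refine ⟨?_, ?_, ?_⟩
  · rw [hψ₁ _ _ _ ha, hψ₂ _ _ _ hbγ, hf, hg, hh, hE, ← hC, ← hE0]
    have : Complex.exp ((u1 : ℂ) * a + u2 / a) *
        (d * Complex.exp (-r * u1 - (u2 : ℂ) / r)) = d * (C * E0) := by
      rw [← key1]; ring
    rw [this]
    have h2 : (2 * b * lam * mu : ℂ) ≠ 0 := by
      exact mul_ne_zero (mul_ne_zero (mul_ne_zero two_ne_zero hb) hlam) hmu
    have h3 : (2 * b * lam * mu) * (b - γ) ≠ 0 := mul_ne_zero h2 hbγd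
    have e1 : -(d * C * ((b ^ 2 - γ ^ 2) * (lam - mu * E0))) / (2 * b * lam * mu) / (b - γ)
        = -(d * C * ((b + γ) * (lam - mu * E0))) / (2 * b * lam * mu) := by
      rw [div_div, div_eq_div_iff h3 h2]; ring
    rw [e1, ← add_div, ← mul_div_assoc, eq_div_iff h2]
    ring
  · rw [hψ₁ _ _ _ ha', hψ₂ _ _ _ hbγ', hf, hg, hh, hE, ← hC, ← hE0]
    have : Complex.exp ((u1 : ℂ) * (-a) + u2 / (-a)) *
        (d * Complex.exp (-r * u1 - (u2 : ℂ) / r)) = d * C := by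
      rw [← key2]; ring
    rw [this]
    have h2 : (2 * b * lam * mu : ℂ) ≠ 0 := by
      exact mul_ne_zero (mul_ne_zero (mul_ne_zero two_ne_zero hb) hlam) hmu
    have h3 : (2 * b * lam * mu) * (-b - γ) ≠ 0 := mul_ne_zero h2 hbγd'
    have e1 : -(d * C * ((b ^ 2 - γ ^ 2) * (lam - mu * E0))) / (2 * b * lam * mu) / (-b - γ)
        = (d * C * ((b - γ) * (lam - mu * E0))) / (2 * b * lam * mu) := by
      rw [div_div, div_eq_div_iff h3 h2]; ring
    rw [e1, ← add_div, ← mul_div_assoc, eq_div_iff h2]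
    ring
  · rw [hψ₁ _ _ _ hr, hf]
    have : Complex.exp ((u1 : ℂ) * r + u2 / r) * Complex.exp (-r * u1 - (u2 : ℂ) / r)
        = 1 := by
      rw [← Complex.exp_add]
      rw [show (u1 : ℂ) * r + u2 / r + (-r * u1 - (u2 : ℂ) / r) = 0 by ring]
      exact Complex.exp_zero
    calc Complex.exp ((u1 : ℂ) * r + u2 / r) * (d * Complex.exp (-r * u1 - (u2 : ℂ) / r))
        = (Complex.exp ((u1 : ℂ) * r + u2 / r) * Complex.exp (-r * u1 - (u2 : ℂ) / r)) * d := by ring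
      _ = d := by rw [this]; ring
end

section
/- Let a, r, γ, d, λ, μ be complex constants with a ≠ 0, r ≠ 0, γ ≠ 0, λ ≠ 0, μ ≠ 0, and set b = iγ. Define the complex-valued functions of (u¹,u²) ∈ ℝ²: E(u) = exp(2a·u¹ + 2u²/a), C(u) = d·exp(−(a+r)·u¹ − (a+r)·u²/(a·r)), g(u) = C(u)·(γ(λ − μE(u)) + b(λ + μE(u)))/(2bλμ), h(u) = −C(u)·(b² − γ²)(λ − μE(u))/(2bλμ), and the coordinate functions x(u) = g(u), y(u) = g(u) − h(u)/γ. Then at every point of ℝ² the orthogonality relation holds: (∂x/∂u¹)(∂x/∂u²) + (∂y/∂u¹)(∂y/∂u²) = 0. -/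
lemma expDeriv (A B : ℂ) (t : ℝ) :
    HasDerivAt (fun s : ℝ => Complex.exp (A * s + B)) (A * Complex.exp (A * t + B)) t := by
  have h1 : HasDerivAt (fun z : ℂ => A * z + B) A (t : ℂ) := by
    simpa using ((hasDerivAt_id ((t : ℂ))).const_mul A).add_const B
  have h : HasDerivAt (fun z : ℂ => Complex.exp (A * z + B))
      (Complex.exp (A * (t : ℂ) + B) * A) (t : ℂ) :=
    (Complex.hasDerivAt_exp _).comp _ h1
  simpa [mul_comm] using h.comp_ofReal

lemma xsplit (b lam mu γ Cv Ev : ℂ) (hb0 : b ≠ 0) (hlam : lam ≠ 0) (hmu : mu ≠ 0) :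
    Cv * (γ * (lam - mu * Ev) + b * (lam + mu * Ev)) / (2 * b * lam * mu) =
    (γ + b) / (2 * b * mu) * Cv + (b - γ) / (2 * b * lam) * (Cv * Ev) := by
  field_simp
  ring

lemma ysplit (b lam mu γ Cv Ev : ℂ) (hb0 : b ≠ 0) (hlam : lam ≠ 0) (hmu : mu ≠ 0)
    (hγ : γ ≠ 0) :
    Cv * (γ * (lam - mu * Ev) + b * (lam + mu * Ev)) / (2 * b * lam * mu) -
      (-(Cv * ((b ^ 2 - γ ^ 2) * (lam - mu * Ev))) / (2 * b * lam * mu)) / γ =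
    (b + γ) / (2 * γ * mu) * Cv + (γ - b) / (2 * γ * lam) * (Cv * Ev) := by
  rw [div_div, div_sub_div _ _ (by simp [hb0, hlam, hmu] : (2*b*lam*mu : ℂ) ≠ 0)
    (by simp [hb0, hlam, hmu, hγ] : (2*b*lam*mu*γ : ℂ) ≠ 0)]
  rw [div_mul_eq_mul_div, div_mul_eq_mul_div, div_add_div _ _
    (by simp [hγ, hmu] : (2*γ*mu : ℂ) ≠ 0) (by simp [hγ, hlam] : (2*γ*lam : ℂ) ≠ 0)]
  rw [div_eq_div_iff (by simp [hb0, hlam, hmu, hγ] : (2*b*lam*mu*(2*b*lam*mu*γ) : ℂ) ≠ 0)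
    (by simp [hγ, hlam, hmu] : (2*γ*mu*(2*γ*lam) : ℂ) ≠ 0)]
  ring

theorem stmt_1 (a r γ d lam mu b : ℂ)
    (ha : a ≠ 0) (hr : r ≠ 0) (hγ : γ ≠ 0) (hlam : lam ≠ 0) (hmu : mu ≠ 0)
    (hb : b = Complex.I * γ)
    (E C g h x y : ℝ → ℝ → ℂ)
    (hE : ∀ u1 u2 : ℝ, E u1 u2 = Complex.exp (2 * a * u1 + 2 * (u2 : ℂ) / a))
    (hC : ∀ u1 u2 : ℝ, C u1 u2 =
      d * Complex.exp (-(a + r) * u1 - (a + r) * (u2 : ℂ) / (a * r)))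
    (hg : ∀ u1 u2 : ℝ, g u1 u2 =
      C u1 u2 * (γ * (lam - mu * E u1 u2) + b * (lam + mu * E u1 u2)) /
        (2 * b * lam * mu))
    (hh : ∀ u1 u2 : ℝ, h u1 u2 =
      -(C u1 u2 * ((b ^ 2 - γ ^ 2) * (lam - mu * E u1 u2))) / (2 * b * lam * mu))
    (hx : ∀ u1 u2 : ℝ, x u1 u2 = g u1 u2)
    (hy : ∀ u1 u2 : ℝ, y u1 u2 = g u1 u2 - h u1 u2 / γ) :
    ∀ u1 u2 : ℝ,
      deriv (fun t : ℝ => x t u2) u1 * deriv (fun t : ℝ => x u1 t) u2 +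
      deriv (fun t : ℝ => y t u2) u1 * deriv (fun t : ℝ => y u1 t) u2 = 0 := by
  have hb0 : b ≠ 0 := by
    rw [hb]; exact mul_ne_zero Complex.I_ne_zero hγ
  have hb2 : b ^ 2 = -γ ^ 2 := by
    rw [hb, mul_pow, Complex.I_sq]; ring
  obtain ⟨p, hp⟩ : ∃ p : ℂ, p = -(a + r) := ⟨_, rfl⟩
  obtain ⟨q, hq⟩ : ∃ q : ℂ, q = -(a + r) / (a * r) := ⟨_, rfl⟩
  obtain ⟨p2, hp2⟩ : ∃ p2 : ℂ, p2 = a - r := ⟨_, rfl⟩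
  obtain ⟨q2, hq2⟩ : ∃ q2 : ℂ, q2 = -(a - r) / (a * r) := ⟨_, rfl⟩
  obtain ⟨K1, hK1⟩ : ∃ K : ℂ, K = (γ + b) / (2 * b * mu) * d := ⟨_, rfl⟩
  obtain ⟨K2, hK2⟩ : ∃ K : ℂ, K = (b - γ) / (2 * b * lam) * d := ⟨_, rfl⟩
  obtain ⟨K1', hK1'⟩ : ∃ K : ℂ, K = (b + γ) / (2 * γ * mu) * d := ⟨_, rfl⟩
  obtain ⟨K2', hK2'⟩ : ∃ K : ℂ, K = (γ - b) / (2 * γ * lam) * d := ⟨_, rfl⟩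
  -- basic exponential identities
  have hCf : ∀ s t : ℝ, C s t = d * Complex.exp (p * s + q * t) := by
    intro s t
    rw [hC]
    congr 2
    rw [hp, hq]
    field_simp
    ring
  have hCE : ∀ s t : ℝ, C s t * E s t = d * Complex.exp (p2 * s + q2 * t) := by
    intro s t
    rw [hC, hE, mul_assoc, ← Complex.exp_add]
    congr 2
    rw [hp2, hq2]
    field_simp
    ring
  -- representations of x and y
  have hxrep : ∀ s t : ℝ, x s t =
      K1 * Complex.exp (p * s + q * t) + K2 * Complex.exp (p2 * s + q2 * t) := by
    intro s t
    rw [hx, hg, xsplit b lam mu γ (C s t) (E s t) hb0 hlam hmu, hCE, hCf, hK1, hK2]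
    ring
  have hyrep : ∀ s t : ℝ, y s t =
      K1' * Complex.exp (p * s + q * t) + K2' * Complex.exp (p2 * s + q2 * t) := by
    intro s t
    rw [hy, hg, hh, ysplit b lam mu γ (C s t) (E s t) hb0 hlam hmu hγ, hCE, hCf,
      hK1', hK2']
    ring
  -- coefficient identities
  have hbm : (2 * b * mu) ^ 2 ≠ 0 := pow_ne_zero _ (by simp [hb0, hmu])
  have hgm : (2 * γ * mu) ^ 2 ≠ 0 := pow_ne_zero _ (by simp [hγ, hmu])
  have hbl : (2 * b * lam) ^ 2 ≠ 0 := pow_ne_zero _ (by simp [hb0, hlam])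
  have hgl2 : (2 * γ * lam) ^ 2 ≠ 0 := pow_ne_zero _ (by simp [hγ, hlam])
  have hA : K1 ^ 2 + K1' ^ 2 = 0 := by
    rw [hK1, hK1', mul_pow, mul_pow, div_pow, div_pow,
      div_mul_eq_mul_div, div_mul_eq_mul_div,
      div_add_div _ _ hbm hgm, div_eq_zero_iff]
    left
    linear_combination (4 * d ^ 2 * mu ^ 2 * (γ + b) ^ 2) * hb2
  have hB : K2 ^ 2 + K2' ^ 2 = 0 := by
    rw [hK2, hK2', mul_pow, mul_pow, div_pow, div_pow,
      div_mul_eq_mul_div, div_mul_eq_mul_div,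
      div_add_div _ _ hbl hgl2, div_eq_zero_iff]
    left
    linear_combination (4 * d ^ 2 * lam ^ 2 * (b - γ) ^ 2) * hb2
  have hpq : p * q2 + q * p2 = 0 := by
    rw [hp, hq, hp2, hq2]
    field_simp
    ring
  intro u1 u2
  -- derivatives
  have dx1 : HasDerivAt (fun t : ℝ => x t u2)
      (K1 * (p * Complex.exp (p * u1 + q * u2)) +
       K2 * (p2 * Complex.exp (p2 * u1 + q2 * u2))) u1 := by
    have h1 := ((expDeriv p (q * u2) u1).const_mul K1).add
      ((expDeriv p2 (q2 * u2) u1).const_mul K2)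
    exact h1.congr_of_eventuallyEq
      (Filter.Eventually.of_forall fun s => (hxrep s u2))
  have dx2 : HasDerivAt (fun t : ℝ => x u1 t)
      (K1 * (q * Complex.exp (q * u2 + p * u1)) +
       K2 * (q2 * Complex.exp (q2 * u2 + p2 * u1))) u2 := by
    have h1 := ((expDeriv q (p * u1) u2).const_mul K1).add
      ((expDeriv q2 (p2 * u1) u2).const_mul K2)
    refine h1.congr_of_eventuallyEq (Filter.Eventually.of_forall fun s => ?_)
    show x u1 s = _
    rw [hxrep u1 s, add_comm (p * (u1 : ℂ)) (q * (s : ℂ)),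
      add_comm (p2 * (u1 : ℂ)) (q2 * (s : ℂ))]
    rfl
  have dy1 : HasDerivAt (fun t : ℝ => y t u2)
      (K1' * (p * Complex.exp (p * u1 + q * u2)) +
       K2' * (p2 * Complex.exp (p2 * u1 + q2 * u2))) u1 := by
    have h1 := ((expDeriv p (q * u2) u1).const_mul K1').add
      ((expDeriv p2 (q2 * u2) u1).const_mul K2')
    exact h1.congr_of_eventuallyEq
      (Filter.Eventually.of_forall fun s => (hyrep s u2))
  have dy2 : HasDerivAt (fun t : ℝ => y u1 t)
      (K1' * (q * Complex.exp (q * u2 + p * u1)) +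
       K2' * (q2 * Complex.exp (q2 * u2 + p2 * u1))) u2 := by
    have h1 := ((expDeriv q (p * u1) u2).const_mul K1').add
      ((expDeriv q2 (p2 * u1) u2).const_mul K2')
    refine h1.congr_of_eventuallyEq (Filter.Eventually.of_forall fun s => ?_)
    show y u1 s = _
    rw [hyrep u1 s, add_comm (p * (u1 : ℂ)) (q * (s : ℂ)),
      add_comm (p2 * (u1 : ℂ)) (q2 * (s : ℂ))]
    rfl
  rw [dx1.deriv, dx2.deriv, dy1.deriv, dy2.deriv]
  rw [add_comm (q * (u2 : ℂ)) (p * (u1 : ℂ)), add_comm (q2 * (u2 : ℂ)) (p2 * (u1 : ℂ))]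
  set e1 : ℂ := Complex.exp (p * u1 + q * u2)
  set e2 : ℂ := Complex.exp (p2 * u1 + q2 * u2)
  linear_combination (p * q * e1 ^ 2) * hA + (p2 * q2 * e2 ^ 2) * hB +
    ((K1 * K2 + K1' * K2') * e1 * e2) * hpq
end

section
/- Let λ₁, λ₂ be real numbers with λ₁² + λ₂² ≠ 0 and set N = λ₁² + λ₂². Define x(u¹,u²) = e^{−u¹−u²}((λ₁−λ₂)cos(u¹−u²) + (λ₁+λ₂)sin(u¹−u²))/N and y(u¹,u²) = e^{−u¹−u²}((λ₁+λ₂)cos(u¹−u²) − (λ₁−λ₂)sin(u¹−u²))/N. Then at every point of ℝ²: (∂x/∂u¹)(∂x/∂u²) + (∂y/∂u¹)(∂y/∂u²) = 0. -/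
lemma hd1 (A B c N : ℝ) (t : ℝ) :
    HasDerivAt (fun t : ℝ => Real.exp (-t - c) * (A * Real.cos (t - c) + B * Real.sin (t - c)) / N)
      (Real.exp (-t - c) * ((B - A) * Real.cos (t - c) - (A + B) * Real.sin (t - c)) / N) t := by
  have h1 : HasDerivAt (fun t : ℝ => -t - c) (-1) t := by
    simpa using ((hasDerivAt_id t).neg.sub_const c)
  have he : HasDerivAt (fun t : ℝ => Real.exp (-t - c)) (Real.exp (-t - c) * (-1)) t :=
    by have := (Real.hasDerivAt_exp (-t - c)).comp t h1; exact this
  have h2 : HasDerivAt (fun t : ℝ => t - c) 1 t := by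
    simpa using ((hasDerivAt_id t).sub_const c)
  have hc : HasDerivAt (fun t : ℝ => Real.cos (t - c)) (-Real.sin (t - c) * 1) t :=
    by have := (Real.hasDerivAt_cos (t - c)).comp t h2; exact this
  have hs : HasDerivAt (fun t : ℝ => Real.sin (t - c)) (Real.cos (t - c) * 1) t :=
    by have := (Real.hasDerivAt_sin (t - c)).comp t h2; exact this
  have := ((he.mul (((hc.const_mul A)).add (hs.const_mul B))).div_const N)
  exact this.congr_deriv (by simp only [Pi.add_apply]; ring)

lemma hd2 (A B c N : ℝ) (t : ℝ) :
    HasDerivAt (fun t : ℝ => Real.exp (-c - t) * (A * Real.cos (c - t) + B * Real.sin (c - t)) / N)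
      (Real.exp (-c - t) * (-(A + B) * Real.cos (c - t) + (A - B) * Real.sin (c - t)) / N) t := by
  have h1 : HasDerivAt (fun t : ℝ => -c - t) (-1) t := by
    simpa using ((hasDerivAt_id t).const_sub (-c))
  have he : HasDerivAt (fun t : ℝ => Real.exp (-c - t)) (Real.exp (-c - t) * (-1)) t :=
    by have := (Real.hasDerivAt_exp (-c - t)).comp t h1; exact this
  have h2 : HasDerivAt (fun t : ℝ => c - t) (-1) t := by
    simpa using ((hasDerivAt_id t).const_sub c)
  have hc : HasDerivAt (fun t : ℝ => Real.cos (c - t)) (-Real.sin (c - t) * (-1)) t :=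
    by have := (Real.hasDerivAt_cos (c - t)).comp t h2; exact this
  have hs : HasDerivAt (fun t : ℝ => Real.sin (c - t)) (Real.cos (c - t) * (-1)) t :=
    by have := (Real.hasDerivAt_sin (c - t)).comp t h2; exact this
  have := ((he.mul (((hc.const_mul A)).add (hs.const_mul B))).div_const N)
  exact this.congr_deriv (by simp only [Pi.add_apply]; ring)

/- STATEMENT 2: orthogonality of the explicit curvilinear coordinates of
Example 1, specialized at a = i, d = 1, r = 1, λ = μ̄ = λ₁ + iλ₂. -/
theorem stmt_2 (l1 l2 : ℝ) (hN : l1 ^ 2 + l2 ^ 2 ≠ 0)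
    (N : ℝ) (hNdef : N = l1 ^ 2 + l2 ^ 2)
    (x y : ℝ → ℝ → ℝ)
    (hx : ∀ u1 u2 : ℝ, x u1 u2 =
      Real.exp (-u1 - u2) *
        ((l1 - l2) * Real.cos (u1 - u2) + (l1 + l2) * Real.sin (u1 - u2)) / N)
    (hy : ∀ u1 u2 : ℝ, y u1 u2 =
      Real.exp (-u1 - u2) *
        ((l1 + l2) * Real.cos (u1 - u2) - (l1 - l2) * Real.sin (u1 - u2)) / N) :
    ∀ u1 u2 : ℝ,
      deriv (fun t : ℝ => x t u2) u1 * deriv (fun t : ℝ => x u1 t) u2 +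
      deriv (fun t : ℝ => y t u2) u1 * deriv (fun t : ℝ => y u1 t) u2 = 0 := by
  intro u1 u2
  have ex1 : (fun t : ℝ => x t u2) =
      fun t : ℝ => Real.exp (-t - u2) *
        ((l1 - l2) * Real.cos (t - u2) + (l1 + l2) * Real.sin (t - u2)) / N := by
    funext t; exact hx t u2
  have ex2 : (fun t : ℝ => x u1 t) =
      fun t : ℝ => Real.exp (-u1 - t) *
        ((l1 - l2) * Real.cos (u1 - t) + (l1 + l2) * Real.sin (u1 - t)) / N := by
    funext t; exact hx u1 t
  have ey1 : (fun t : ℝ => y t u2) =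
      fun t : ℝ => Real.exp (-t - u2) *
        ((l1 + l2) * Real.cos (t - u2) + (-(l1 - l2)) * Real.sin (t - u2)) / N := by
    funext t; rw [hy t u2]; ring_nf
  have ey2 : (fun t : ℝ => y u1 t) =
      fun t : ℝ => Real.exp (-u1 - t) *
        ((l1 + l2) * Real.cos (u1 - t) + (-(l1 - l2)) * Real.sin (u1 - t)) / N := by
    funext t; rw [hy u1 t]; ring_nf
  rw [ex1, ex2, ey1, ey2,
    (hd1 (l1 - l2) (l1 + l2) u2 N u1).deriv,
    (hd2 (l1 - l2) (l1 + l2) u1 N u2).deriv,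
    (hd1 (l1 + l2) (-(l1 - l2)) u2 N u1).deriv,
    (hd2 (l1 + l2) (-(l1 - l2)) u1 N u2).deriv]
  have hsc := Real.sin_sq_add_cos_sq (u1 - u2)
  field_simp
  ring
end

section
/- Let λ₁, λ₂ be real numbers with λ₁² + λ₂² ≠ 0 and set N = λ₁² + λ₂². Define x(u¹,u²) = [−(2λ₁+λ₂)cos((3/2)(u¹−2u²)) + 3(2λ₁−λ₂)cos(u¹/2+u²) + (λ₁−2λ₂)sin((3/2)(u¹−2u²)) + 3(λ₁+2λ₂)sin(u¹/2+u²)]/(4N) and y(u¹,u²) = [(λ₁−2λ₂)cos((3/2)(u¹−2u²)) + 3(λ₁+2λ₂)cos(u¹/2+u²) + (2λ₁+λ₂)sin((3/2)(u¹−2u²)) + 3(−2λ₁+λ₂)sin(u¹/2+u²)]/(4N). Then at every point of ℝ²: (∂x/∂u¹)(∂x/∂u²) + (∂y/∂u¹)(∂y/∂u²) = 0. -/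
/-- General derivative helper for linear combos of cos/sin with affine arguments. -/
lemma hasDerivAt_combo (p q r s k c1 c2 d1 d2 t : ℝ) :
    HasDerivAt (fun t : ℝ =>
      (p * Real.cos (c1 * t + d1) + q * Real.cos (c2 * t + d2) +
        r * Real.sin (c1 * t + d1) + s * Real.sin (c2 * t + d2)) / k)
      ((p * (-Real.sin (c1 * t + d1)) * c1 + q * (-Real.sin (c2 * t + d2)) * c2 +
        r * Real.cos (c1 * t + d1) * c1 + s * Real.cos (c2 * t + d2) * c2) / k) t := by
  have ha1 : HasDerivAt (fun t : ℝ => c1 * t + d1) c1 t := by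
    simpa using ((hasDerivAt_id t).const_mul c1).add_const d1
  have ha2 : HasDerivAt (fun t : ℝ => c2 * t + d2) c2 t := by
    simpa using ((hasDerivAt_id t).const_mul c2).add_const d2
  have hc1 := (Real.hasDerivAt_cos (c1 * t + d1)).comp t ha1
  have hc2 := (Real.hasDerivAt_cos (c2 * t + d2)).comp t ha2
  have hs1 := (Real.hasDerivAt_sin (c1 * t + d1)).comp t ha1
  have hs2 := (Real.hasDerivAt_sin (c2 * t + d2)).comp t ha2
  have := (((((hc1.const_mul p).add (hc2.const_mul q)).add (hs1.const_mul r)).add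
    (hs2.const_mul s)).div_const k)
  exact this.congr_deriv (by ring)

/- STATEMENT 3: orthogonality of the explicit curvilinear coordinates of
Example 2, specialized at a = i, r = i/2, γ₁ = 1, λ = μ̄ = λ₁ + iλ₂. -/
theorem stmt_3 (l1 l2 : ℝ) (hN : l1 ^ 2 + l2 ^ 2 ≠ 0)
    (N : ℝ) (hNdef : N = l1 ^ 2 + l2 ^ 2)
    (x y : ℝ → ℝ → ℝ)
    (hx : ∀ u1 u2 : ℝ, x u1 u2 =
      (-(2 * l1 + l2) * Real.cos ((3 / 2) * (u1 - 2 * u2)) +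
        3 * (2 * l1 - l2) * Real.cos (u1 / 2 + u2) +
        (l1 - 2 * l2) * Real.sin ((3 / 2) * (u1 - 2 * u2)) +
        3 * (l1 + 2 * l2) * Real.sin (u1 / 2 + u2)) / (4 * N))
    (hy : ∀ u1 u2 : ℝ, y u1 u2 =
      ((l1 - 2 * l2) * Real.cos ((3 / 2) * (u1 - 2 * u2)) +
        3 * (l1 + 2 * l2) * Real.cos (u1 / 2 + u2) +
        (2 * l1 + l2) * Real.sin ((3 / 2) * (u1 - 2 * u2)) +
        3 * (-(2 * l1) + l2) * Real.sin (u1 / 2 + u2)) / (4 * N)) :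
    ∀ u1 u2 : ℝ,
      deriv (fun t : ℝ => x t u2) u1 * deriv (fun t : ℝ => x u1 t) u2 +
      deriv (fun t : ℝ => y t u2) u1 * deriv (fun t : ℝ => y u1 t) u2 = 0 := by
  intro u1 u2
  set p : ℝ := -(2 * l1 + l2)
  set q : ℝ := 3 * (2 * l1 - l2)
  set r : ℝ := l1 - 2 * l2
  set s : ℝ := 3 * (l1 + 2 * l2)
  set p' : ℝ := l1 - 2 * l2
  set q' : ℝ := 3 * (l1 + 2 * l2)
  set r' : ℝ := 2 * l1 + l2
  set s' : ℝ := 3 * (-(2 * l1) + l2)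
  have harg1 : ∀ t : ℝ, (3 / 2 : ℝ) * (t - 2 * u2) = (3/2) * t + (-3 * u2) := by
    intro t; ring
  have harg2 : ∀ t : ℝ, t / 2 + u2 = (1/2) * t + u2 := by intro t; ring
  have harg1' : ∀ t : ℝ, (3 / 2 : ℝ) * (u1 - 2 * t) = (-3) * t + (3/2 * u1) := by
    intro t; ring
  have harg2' : ∀ t : ℝ, u1 / 2 + t = (1 : ℝ) * t + u1 / 2 := by intro t; ring
  have hx1 : (fun t : ℝ => x t u2) = fun t : ℝ =>
      (p * Real.cos ((3/2) * t + (-3 * u2)) + q * Real.cos ((1/2) * t + u2) +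
        r * Real.sin ((3/2) * t + (-3 * u2)) + s * Real.sin ((1/2) * t + u2)) / (4 * N) := by
    funext t; rw [hx t u2, harg1 t, harg2 t]
  have hx2 : (fun t : ℝ => x u1 t) = fun t : ℝ =>
      (p * Real.cos ((-3) * t + 3/2 * u1) + q * Real.cos ((1 : ℝ) * t + u1 / 2) +
        r * Real.sin ((-3) * t + 3/2 * u1) + s * Real.sin ((1 : ℝ) * t + u1 / 2)) / (4 * N) := by
    funext t; rw [hx u1 t, harg1' t, harg2' t]
  have hy1 : (fun t : ℝ => y t u2) = fun t : ℝ =>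
      (p' * Real.cos ((3/2) * t + (-3 * u2)) + q' * Real.cos ((1/2) * t + u2) +
        r' * Real.sin ((3/2) * t + (-3 * u2)) + s' * Real.sin ((1/2) * t + u2)) / (4 * N) := by
    funext t; rw [hy t u2, harg1 t, harg2 t]
  have hy2 : (fun t : ℝ => y u1 t) = fun t : ℝ =>
      (p' * Real.cos ((-3) * t + 3/2 * u1) + q' * Real.cos ((1 : ℝ) * t + u1 / 2) +
        r' * Real.sin ((-3) * t + 3/2 * u1) + s' * Real.sin ((1 : ℝ) * t + u1 / 2)) / (4 * N) := by
    funext t; rw [hy u1 t, harg1' t, harg2' t]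
  rw [hx1, hx2, hy1, hy2,
    (hasDerivAt_combo p q r s (4*N) (3/2) (1/2) (-3*u2) u2 u1).deriv,
    (hasDerivAt_combo p q r s (4*N) (-3) 1 (3/2*u1) (u1/2) u2).deriv,
    (hasDerivAt_combo p' q' r' s' (4*N) (3/2) (1/2) (-3*u2) u2 u1).deriv,
    (hasDerivAt_combo p' q' r' s' (4*N) (-3) 1 (3/2*u1) (u1/2) u2).deriv]
  have e1 : (3/2 : ℝ) * u1 + -3 * u2 = -3 * u2 + 3/2 * u1 := by ring
  have e2 : (1/2 : ℝ) * u1 + u2 = 1 * u2 + u1 / 2 := by ring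
  rw [e1, e2]
  set A : ℝ := -3 * u2 + 3/2 * u1
  set B : ℝ := 1 * u2 + u1 / 2
  have hN' : N ≠ 0 := hNdef ▸ hN
  have hsA := Real.sin_sq_add_cos_sq A
  have hsB := Real.sin_sq_add_cos_sq B
  field_simp [p, q, r, s, p', q', r', s', hNdef]
  nlinarith [hsA, hsB, sq_nonneg (l1 + l2), sq_nonneg (l1 - l2), sq_nonneg l1, sq_nonneg l2]
end

section
/- Let λ be a nonzero real number and define D(u¹,u²) = e^{2u¹} + λ²e^{2u²}, x¹(u¹,u²) = 8λe^{u¹−u²}/(3D(u¹,u²)) and x²(u¹,u²) = −(2e^{2u¹−2u²} − 6λ²)/(3D(u¹,u²)). Then at every point of ℝ²: (∂x¹/∂u¹)(∂x¹/∂u²) + (∂x²/∂u¹)(∂x²/∂u²) = 0. -/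
/- STATEMENT 4: orthogonality of the explicit coordinates of Example 3,
specialized at a = 1, μ = 5/(3λ), γ = 2/3. -/
theorem stmt_4 (lam : ℝ) (hlam : lam ≠ 0)
    (D x1 x2 : ℝ → ℝ → ℝ)
    (hD : ∀ u1 u2 : ℝ, D u1 u2 = Real.exp (2 * u1) + lam ^ 2 * Real.exp (2 * u2))
    (hx1 : ∀ u1 u2 : ℝ, x1 u1 u2 = 8 * lam * Real.exp (u1 - u2) / (3 * D u1 u2))
    (hx2 : ∀ u1 u2 : ℝ, x2 u1 u2 =
      -(2 * Real.exp (2 * u1 - 2 * u2) - 6 * lam ^ 2) / (3 * D u1 u2)) :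
    ∀ u1 u2 : ℝ,
      deriv (fun t : ℝ => x1 t u2) u1 * deriv (fun t : ℝ => x1 u1 t) u2 +
      deriv (fun t : ℝ => x2 t u2) u1 * deriv (fun t : ℝ => x2 u1 t) u2 = 0 := by
  intro u1 u2
  simp only [hx1, hx2, hD]
  have hDpos : ∀ s t : ℝ, 0 < 3 * (Real.exp (2 * s) + lam ^ 2 * Real.exp (2 * t)) := by
    intro s t
    have := Real.exp_pos (2 * s)
    have := Real.exp_pos (2 * t)
    have h2 : 0 < lam ^ 2 := by positivity
    nlinarith
  -- denominator derivatives
  have hden1 : HasDerivAt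
      (fun t : ℝ => 3 * (Real.exp (2 * t) + lam ^ 2 * Real.exp (2 * u2)))
      (3 * (Real.exp (2 * u1) * 2)) u1 := by
    have h := (((hasDerivAt_id u1).const_mul 2).exp.add_const
      (lam ^ 2 * Real.exp (2 * u2))).const_mul 3
    simpa using h
  have hden2 : HasDerivAt
      (fun t : ℝ => 3 * (Real.exp (2 * u1) + lam ^ 2 * Real.exp (2 * t)))
      (3 * (lam ^ 2 * (Real.exp (2 * u2) * 2))) u2 := by
    have h := ((((hasDerivAt_id u2).const_mul 2).exp.const_mul (lam ^ 2)).const_add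
      (Real.exp (2 * u1))).const_mul 3
    simpa using h
  -- numerator derivatives
  have hn1a : HasDerivAt (fun t : ℝ => 8 * lam * Real.exp (t - u2))
      (8 * lam * Real.exp (u1 - u2)) u1 := by
    have h := (((hasDerivAt_id u1).sub_const u2).exp).const_mul (8 * lam)
    simpa using h
  have hn1b : HasDerivAt (fun t : ℝ => 8 * lam * Real.exp (u1 - t))
      (8 * lam * (Real.exp (u1 - u2) * (-1))) u2 := by
    have h := (((hasDerivAt_id u2).const_sub u1).exp).const_mul (8 * lam)
    simpa using h
  have hn2a : HasDerivAt (fun t : ℝ => -(2 * Real.exp (2 * t - 2 * u2) - 6 * lam ^ 2))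
      (-(2 * (Real.exp (2 * u1 - 2 * u2) * 2))) u1 := by
    have h := (((((hasDerivAt_id u1).const_mul 2).sub_const (2 * u2)).exp).const_mul
      2).sub_const (6 * lam ^ 2)
    simpa [Pi.neg_def] using h.neg
  have hn2b : HasDerivAt (fun t : ℝ => -(2 * Real.exp (2 * u1 - 2 * t) - 6 * lam ^ 2))
      (-(2 * (Real.exp (2 * u1 - 2 * u2) * (-2)))) u2 := by
    have h := ((((((hasDerivAt_id u2).const_mul 2).const_sub (2 * u1)).exp).const_mul
      2).sub_const (6 * lam ^ 2))
    simpa [Pi.neg_def] using h.neg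
  have h1a := (hn1a.div hden1 (ne_of_gt (hDpos u1 u2))).deriv
  have h1b := (hn1b.div hden2 (ne_of_gt (hDpos u1 u2))).deriv
  have h2a := (hn2a.div hden1 (ne_of_gt (hDpos u1 u2))).deriv
  have h2b := (hn2b.div hden2 (ne_of_gt (hDpos u1 u2))).deriv
  simp only [Pi.div_def] at h1a h1b h2a h2b
  rw [h1a, h1b, h2a, h2b]
  -- rewrite exponentials in terms of exp u1 and exp u2
  have e1 : Real.exp (2 * u1) = Real.exp u1 ^ 2 := by
    rw [two_mul, Real.exp_add]; ring
  have e2 : Real.exp (2 * u2) = Real.exp u2 ^ 2 := by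
    rw [two_mul, Real.exp_add]; ring
  have e3 : Real.exp (u1 - u2) = Real.exp u1 / Real.exp u2 := Real.exp_sub u1 u2
  have e4 : Real.exp (2 * u1 - 2 * u2) = Real.exp u1 ^ 2 / Real.exp u2 ^ 2 := by
    rw [Real.exp_sub, e1, e2]
  have hb : Real.exp u2 ≠ 0 := (Real.exp_pos u2).ne'
  have hDne : Real.exp u1 ^ 2 + lam ^ 2 * Real.exp u2 ^ 2 ≠ 0 := by
    have := hDpos u1 u2
    rw [e1, e2] at this
    intro h; nlinarith
  rw [e1, e2, e3, e4]
  field_simp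
  ring
end

section
/- Let λ be a nonzero real number and define D(u¹,u²) = e^{2u¹} + λ²e^{2u²}, x¹(u¹,u²) = 8λe^{u¹−u²}/(3D(u¹,u²)) and x²(u¹,u²) = −(2e^{2u¹−2u²} − 6λ²)/(3D(u¹,u²)). Then at every point of ℝ²: (∂x¹/∂u¹)² + (∂x²/∂u¹)² = 64λ²e^{2u¹−2u²}/(9D(u¹,u²)²). -/
/- STATEMENT 5: first squared Lamé coefficient H₁² of the diagonal metric of
Example 3, specialized at a = 1, μ = 5/(3λ), γ = 2/3. -/
theorem stmt_5 (lam : ℝ) (hlam : lam ≠ 0)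
    (D x1 x2 : ℝ → ℝ → ℝ)
    (hD : ∀ u1 u2 : ℝ, D u1 u2 = Real.exp (2 * u1) + lam ^ 2 * Real.exp (2 * u2))
    (hx1 : ∀ u1 u2 : ℝ, x1 u1 u2 = 8 * lam * Real.exp (u1 - u2) / (3 * D u1 u2))
    (hx2 : ∀ u1 u2 : ℝ, x2 u1 u2 =
      -(2 * Real.exp (2 * u1 - 2 * u2) - 6 * lam ^ 2) / (3 * D u1 u2)) :
    ∀ u1 u2 : ℝ,
      (deriv (fun t : ℝ => x1 t u2) u1) ^ 2 + (deriv (fun t : ℝ => x2 t u2) u1) ^ 2 =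
        64 * lam ^ 2 * Real.exp (2 * u1 - 2 * u2) / (9 * (D u1 u2) ^ 2) := by
  intro u1 u2
  have hden : ∀ t : ℝ, 3 * (Real.exp (2 * t) + lam ^ 2 * Real.exp (2 * u2)) ≠ 0 := by
    intro t
    have : 0 < Real.exp (2 * t) + lam ^ 2 * Real.exp (2 * u2) := by positivity
    positivity
  -- denominator derivative
  have hM : HasDerivAt (fun t : ℝ => 3 * (Real.exp (2 * t) + lam ^ 2 * Real.exp (2 * u2)))
      (3 * (Real.exp (2 * u1) * 2)) u1 := by
    have h2t : HasDerivAt (fun t : ℝ => Real.exp (2 * t)) (Real.exp (2 * u1) * 2) u1 := by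
      simpa using ((hasDerivAt_id u1).const_mul 2).exp
    simpa using ((h2t.add_const (lam ^ 2 * Real.exp (2 * u2))).const_mul 3)
  -- numerator 1 derivative
  have hN1 : HasDerivAt (fun t : ℝ => 8 * lam * Real.exp (t - u2))
      (8 * lam * Real.exp (u1 - u2)) u1 := by
    have := ((hasDerivAt_id u1).sub_const u2).exp
    simpa using this.const_mul (8 * lam)
  -- numerator 2 derivative
  have hN2 : HasDerivAt (fun t : ℝ => -(2 * Real.exp (2 * t - 2 * u2) - 6 * lam ^ 2))
      (-(2 * (Real.exp (2 * u1 - 2 * u2) * 2))) u1 := by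
    have h : HasDerivAt (fun t : ℝ => 2 * t - 2 * u2) 2 u1 := by
      simpa using ((hasDerivAt_id u1).const_mul 2).sub_const (2 * u2)
    exact (((h.exp).const_mul 2).sub_const (6 * lam ^ 2)).neg
  have hd1 : HasDerivAt (fun t : ℝ => x1 t u2)
      ((8 * lam * Real.exp (u1 - u2) * (3 * (Real.exp (2 * u1) + lam ^ 2 * Real.exp (2 * u2)))
        - 8 * lam * Real.exp (u1 - u2) * (3 * (Real.exp (2 * u1) * 2)))
        / (3 * (Real.exp (2 * u1) + lam ^ 2 * Real.exp (2 * u2))) ^ 2) u1 := by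
    have := hN1.div hM (hden u1)
    apply this.congr_of_eventuallyEq
    filter_upwards with t
    rw [hx1, hD]; rfl
  have hd2 : HasDerivAt (fun t : ℝ => x2 t u2)
      ((-(2 * (Real.exp (2 * u1 - 2 * u2) * 2)) * (3 * (Real.exp (2 * u1) + lam ^ 2 * Real.exp (2 * u2)))
        - -(2 * Real.exp (2 * u1 - 2 * u2) - 6 * lam ^ 2) * (3 * (Real.exp (2 * u1) * 2)))
        / (3 * (Real.exp (2 * u1) + lam ^ 2 * Real.exp (2 * u2))) ^ 2) u1 := by
    have := hN2.div hM (hden u1)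
    apply this.congr_of_eventuallyEq
    filter_upwards with t
    rw [hx2, hD]; rfl
  rw [hd1.deriv, hd2.deriv, hD]
  have e1 : Real.exp (2 * u1) = Real.exp u1 ^ 2 := by
    rw [two_mul, Real.exp_add]; ring
  have e2 : Real.exp (2 * u2) = Real.exp u2 ^ 2 := by
    rw [two_mul, Real.exp_add]; ring
  have e12 : Real.exp (u1 - u2) = Real.exp u1 / Real.exp u2 := Real.exp_sub u1 u2
  have e3 : Real.exp (2 * u1 - 2 * u2) = (Real.exp u1 / Real.exp u2) ^ 2 := by
    rw [show 2 * u1 - 2 * u2 = (u1 - u2) + (u1 - u2) by ring, Real.exp_add, Real.exp_sub]; ring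
  rw [e1, e2, e12, e3]
  have h1 : Real.exp u1 ≠ 0 := (Real.exp_pos u1).ne'
  have h2 : Real.exp u2 ≠ 0 := (Real.exp_pos u2).ne'
  have hM0 : Real.exp u1 ^ 2 + lam ^ 2 * Real.exp u2 ^ 2 ≠ 0 := by positivity
  field_simp
  ring
end

section
/- Let λ be a nonzero real number and define D(u¹,u²) = e^{2u¹} + λ²e^{2u²}, x¹(u¹,u²) = 8λe^{u¹−u²}/(3D(u¹,u²)) and x²(u¹,u²) = −(2e^{2u¹−2u²} − 6λ²)/(3D(u¹,u²)). Then at every point of ℝ²: (∂x¹/∂u²)² + (∂x²/∂u²)² = 16e^{−4u²}(e^{2u¹} + 3λ²e^{2u²})²/(9D(u¹,u²)²). -/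
/- STATEMENT 6: second squared Lamé coefficient H₂² of the diagonal metric of
Example 3, specialized at a = 1, μ = 5/(3λ), γ = 2/3. -/
theorem stmt_6 (lam : ℝ) (hlam : lam ≠ 0)
    (D x1 x2 : ℝ → ℝ → ℝ)
    (hD : ∀ u1 u2 : ℝ, D u1 u2 = Real.exp (2 * u1) + lam ^ 2 * Real.exp (2 * u2))
    (hx1 : ∀ u1 u2 : ℝ, x1 u1 u2 = 8 * lam * Real.exp (u1 - u2) / (3 * D u1 u2))
    (hx2 : ∀ u1 u2 : ℝ, x2 u1 u2 =
      -(2 * Real.exp (2 * u1 - 2 * u2) - 6 * lam ^ 2) / (3 * D u1 u2)) :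
    ∀ u1 u2 : ℝ,
      (deriv (fun t : ℝ => x1 u1 t) u2) ^ 2 + (deriv (fun t : ℝ => x2 u1 t) u2) ^ 2 =
        16 * Real.exp (-4 * u2) *
          (Real.exp (2 * u1) + 3 * lam ^ 2 * Real.exp (2 * u2)) ^ 2 /
          (9 * (D u1 u2) ^ 2) := by
  intro u1 u2
  have hx1' : (fun t : ℝ => x1 u1 t) =
      fun t : ℝ => 8 * lam * Real.exp (u1 - t) /
        (3 * (Real.exp (2 * u1) + lam ^ 2 * Real.exp (2 * t))) := by
    funext t; rw [hx1, hD]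
  have hx2' : (fun t : ℝ => x2 u1 t) =
      fun t : ℝ => -(2 * Real.exp (2 * u1 - 2 * t) - 6 * lam ^ 2) /
        (3 * (Real.exp (2 * u1) + lam ^ 2 * Real.exp (2 * t))) := by
    funext t; rw [hx2, hD]
  have hDpos : ∀ t : ℝ, 0 < Real.exp (2 * u1) + lam ^ 2 * Real.exp (2 * t) := by
    intro t
    have := Real.exp_pos (2 * u1)
    have h2 := Real.exp_pos (2 * t)
    nlinarith [sq_nonneg lam]
  have hden : (3 : ℝ) * (Real.exp (2 * u1) + lam ^ 2 * Real.exp (2 * u2)) ≠ 0 := by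
    positivity
  -- derivative of denominator
  have hDder : HasDerivAt
      (fun t : ℝ => 3 * (Real.exp (2 * u1) + lam ^ 2 * Real.exp (2 * t)))
      (3 * (lam ^ 2 * (Real.exp (2 * u2) * 2))) u2 := by
    have h : HasDerivAt (fun t : ℝ => 2 * t) 2 u2 := by
      simpa using (hasDerivAt_id u2).const_mul 2
    exact (((h.exp).const_mul (lam ^ 2)).const_add (Real.exp (2 * u1))).const_mul 3
  -- derivative of x1 numerator
  have hN1 : HasDerivAt (fun t : ℝ => 8 * lam * Real.exp (u1 - t))
      (8 * lam * (Real.exp (u1 - u2) * (-1))) u2 := by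
    have h : HasDerivAt (fun t : ℝ => u1 - t) (-1) u2 := by
      simpa using (hasDerivAt_id u2).const_sub u1
    exact (h.exp).const_mul (8 * lam)
  -- derivative of x2 numerator
  have hN2 : HasDerivAt (fun t : ℝ => -(2 * Real.exp (2 * u1 - 2 * t) - 6 * lam ^ 2))
      (-(2 * (Real.exp (2 * u1 - 2 * u2) * (-2)))) u2 := by
    have h : HasDerivAt (fun t : ℝ => 2 * u1 - 2 * t) (-2) u2 := by
      simpa using ((hasDerivAt_id u2).const_mul 2).const_sub (2 * u1)
    exact (((h.exp).const_mul 2).sub_const (6 * lam ^ 2)).neg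
  have hd1 : deriv (fun t : ℝ => 8 * lam * Real.exp (u1 - t) /
      (3 * (Real.exp (2 * u1) + lam ^ 2 * Real.exp (2 * t)))) u2 = _ :=
    (hN1.div hDder hden).deriv
  have hd2 : deriv (fun t : ℝ => -(2 * Real.exp (2 * u1 - 2 * t) - 6 * lam ^ 2) /
      (3 * (Real.exp (2 * u1) + lam ^ 2 * Real.exp (2 * t)))) u2 = _ :=
    (hN2.div hDder hden).deriv
  rw [hx1', hx2', hd1, hd2, hD]
  -- algebra
  have ea : Real.exp (2 * u1) = Real.exp u1 ^ 2 := by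
    rw [two_mul, Real.exp_add]; ring
  have eb : Real.exp (2 * u2) = Real.exp u2 ^ 2 := by
    rw [two_mul, Real.exp_add]; ring
  have ec : Real.exp (u1 - u2) = Real.exp u1 / Real.exp u2 := Real.exp_sub _ _
  have ed : Real.exp (2 * u1 - 2 * u2) = Real.exp u1 ^ 2 / Real.exp u2 ^ 2 := by
    rw [Real.exp_sub, ea, eb]
  have ee : Real.exp (-4 * u2) = 1 / Real.exp u2 ^ 4 := by
    rw [show (-4 : ℝ) * u2 = -(u2 + u2 + u2 + u2) by ring, Real.exp_neg,
      Real.exp_add, Real.exp_add, Real.exp_add]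
    field_simp
  rw [ea, eb, ec, ed, ee]
  have ha : Real.exp u1 ≠ 0 := (Real.exp_pos u1).ne'
  have hb : Real.exp u2 ≠ 0 := (Real.exp_pos u2).ne'
  have hD' : Real.exp u1 ^ 2 + lam ^ 2 * Real.exp u2 ^ 2 ≠ 0 := by
    have := hDpos u2; rw [ea, eb] at this; exact this.ne'
  field_simp
  ring
end

section
/- Let λ be a nonzero real number and define D(u¹,u²) = e^{2u¹} + λ²e^{2u²}, H₁(u¹,u²) = 8λe^{u¹−u²}/(3D(u¹,u²)) and H₂(u¹,u²) = 4e^{−2u²}(e^{2u¹} + 3λ²e^{2u²})/(3D(u¹,u²)). Then at every point of ℝ² the rotation coefficients are symmetric: (∂H₂/∂u¹)/H₁ = (∂H₁/∂u²)/H₂; equivalently H₂·(∂H₂/∂u¹) = H₁·(∂H₁/∂u²). -/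
/- STATEMENT 7: symmetry of the rotation coefficients (Darboux–Egorov
property) of the diagonal metric of Example 3. -/
theorem stmt_7 (lam : ℝ) (hlam : lam ≠ 0)
    (D H1 H2 : ℝ → ℝ → ℝ)
    (hD : ∀ u1 u2 : ℝ, D u1 u2 = Real.exp (2 * u1) + lam ^ 2 * Real.exp (2 * u2))
    (hH1 : ∀ u1 u2 : ℝ, H1 u1 u2 = 8 * lam * Real.exp (u1 - u2) / (3 * D u1 u2))
    (hH2 : ∀ u1 u2 : ℝ, H2 u1 u2 =
      4 * Real.exp (-2 * u2) *
        (Real.exp (2 * u1) + 3 * lam ^ 2 * Real.exp (2 * u2)) / (3 * D u1 u2)) :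
    ∀ u1 u2 : ℝ,
      deriv (fun t : ℝ => H2 t u2) u1 / H1 u1 u2 =
        deriv (fun t : ℝ => H1 u1 t) u2 / H2 u1 u2 ∧
      H2 u1 u2 * deriv (fun t : ℝ => H2 t u2) u1 =
        H1 u1 u2 * deriv (fun t : ℝ => H1 u1 t) u2 := by
  intro u1 u2
  have hexp : ∀ x : ℝ, HasDerivAt (fun t : ℝ => Real.exp (2 * t)) (2 * Real.exp (2 * x)) x := by
    intro x
    have h2x : HasDerivAt (fun t : ℝ => 2 * t) 2 x := by
      simpa using (hasDerivAt_id x).const_mul 2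
    simpa [mul_comm] using h2x.exp
  have hDv : 0 < Real.exp (2 * u1) + lam ^ 2 * Real.exp (2 * u2) := by positivity
  -- deriv of H2 in first variable
  have hd2 : HasDerivAt (fun t : ℝ => H2 t u2)
      (-(16 * lam ^ 2 * Real.exp (2 * u1) * Real.exp (2 * u2) * Real.exp (-2 * u2)) /
        (3 * (Real.exp (2 * u1) + lam ^ 2 * Real.exp (2 * u2)) ^ 2)) u1 := by
    have hnum : HasDerivAt (fun t : ℝ =>
        4 * Real.exp (-2 * u2) * (Real.exp (2 * t) + 3 * lam ^ 2 * Real.exp (2 * u2)))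
        (4 * Real.exp (-2 * u2) * (2 * Real.exp (2 * u1))) u1 := by
      simpa using (((hexp u1).add_const (3 * lam ^ 2 * Real.exp (2 * u2))).const_mul
        (4 * Real.exp (-2 * u2)))
    have hden : HasDerivAt (fun t : ℝ =>
        3 * (Real.exp (2 * t) + lam ^ 2 * Real.exp (2 * u2)))
        (3 * (2 * Real.exp (2 * u1))) u1 := by
      simpa using (((hexp u1).add_const (lam ^ 2 * Real.exp (2 * u2))).const_mul 3)
    have hden0 : (3 : ℝ) * (Real.exp (2 * u1) + lam ^ 2 * Real.exp (2 * u2)) ≠ 0 := by positivity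
    have h := hnum.div hden hden0
    have heq : (fun t : ℝ => H2 t u2) = fun t : ℝ =>
        4 * Real.exp (-2 * u2) * (Real.exp (2 * t) + 3 * lam ^ 2 * Real.exp (2 * u2)) /
          (3 * (Real.exp (2 * t) + lam ^ 2 * Real.exp (2 * u2))) := by
      funext t; rw [hH2, hD]
    rw [heq]
    refine h.congr_deriv ?_
    rw [div_eq_div_iff (by positivity) (by positivity)]
    ring
  -- deriv of H1 in second variable
  have hd1 : HasDerivAt (fun t : ℝ => H1 u1 t)
      (-(8 * lam * Real.exp (u1 - u2) *
          (Real.exp (2 * u1) + 3 * lam ^ 2 * Real.exp (2 * u2))) /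
        (3 * (Real.exp (2 * u1) + lam ^ 2 * Real.exp (2 * u2)) ^ 2)) u2 := by
    have hnum : HasDerivAt (fun t : ℝ => 8 * lam * Real.exp (u1 - t))
        (8 * lam * (-Real.exp (u1 - u2))) u2 := by
      have hsub : HasDerivAt (fun t : ℝ => u1 - t) (-1) u2 := by
        simpa using (hasDerivAt_id' u2).const_sub u1
      have h := hsub.exp
      simpa [mul_comm] using h.const_mul (8 * lam)
    have hden : HasDerivAt (fun t : ℝ =>
        3 * (Real.exp (2 * u1) + lam ^ 2 * Real.exp (2 * t)))
        (3 * (lam ^ 2 * (2 * Real.exp (2 * u2)))) u2 := by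
      exact (((hexp u2).const_mul (lam ^ 2)).const_add (Real.exp (2 * u1))).const_mul 3
    have hden0 : (3 : ℝ) * (Real.exp (2 * u1) + lam ^ 2 * Real.exp (2 * u2)) ≠ 0 := by positivity
    have h := hnum.div hden hden0
    have heq : (fun t : ℝ => H1 u1 t) = fun t : ℝ =>
        8 * lam * Real.exp (u1 - t) /
          (3 * (Real.exp (2 * u1) + lam ^ 2 * Real.exp (2 * t))) := by
      funext t; rw [hH1, hD]
    rw [heq]
    refine h.congr_deriv ?_
    rw [div_eq_div_iff (by positivity) (by positivity)]
    ring
  rw [hd1.deriv, hd2.deriv, hH1, hH2, hD]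
  -- rewrite all exponentials in terms of a = exp u1, b = exp u2
  have ha : Real.exp (2 * u1) = Real.exp u1 ^ 2 := by
    rw [two_mul, Real.exp_add]; ring
  have hb : Real.exp (2 * u2) = Real.exp u2 ^ 2 := by
    rw [two_mul, Real.exp_add]; ring
  have hnb : Real.exp (-2 * u2) = (Real.exp u2 ^ 2)⁻¹ := by
    rw [show (-2 : ℝ) * u2 = -(2 * u2) by ring, Real.exp_neg, hb]
  have hab : Real.exp (u1 - u2) = Real.exp u1 / Real.exp u2 := Real.exp_sub u1 u2
  rw [ha, hb, hnb, hab]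
  have hA : Real.exp u1 ≠ 0 := (Real.exp_pos _).ne'
  have hB : Real.exp u2 ≠ 0 := (Real.exp_pos _).ne'
  have hDD : Real.exp u1 ^ 2 + lam ^ 2 * Real.exp u2 ^ 2 ≠ 0 := by positivity
  constructor
  · rw [div_eq_div_iff]
    · field_simp
      ring
    · positivity
    · positivity
  · field_simp
    ring
end

section
/- Let λ be a nonzero real number and define D(u¹,u²) = e^{2u¹} + λ²e^{2u²}, H₁(u¹,u²) = 8λe^{u¹−u²}/(3D(u¹,u²)), H₂(u¹,u²) = 4e^{−2u²}(e^{2u¹} + 3λ²e^{2u²})/(3D(u¹,u²)), and the coordinate function ψ(u¹,u²) = x¹(u¹,u²) = 8λe^{u¹−u²}/(3D(u¹,u²)). Then at every point of ℝ² the second-order linear equation holds: ∂²ψ/∂u¹∂u² = ((∂H₁/∂u²)/H₁)·(∂ψ/∂u¹) + ((∂H₂/∂u¹)/H₂)·(∂ψ/∂u²). -/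
/- STATEMENT 8: the coordinate function ψ = x¹ of Example 3 satisfies the
second-order linear equation ∂²ψ/∂u¹∂u² = ∂_{u²}(log H₁)·∂_{u¹}ψ +
∂_{u¹}(log H₂)·∂_{u²}ψ. -/
theorem stmt_8 (lam : ℝ) (hlam : lam ≠ 0)
    (D H1 H2 ψ : ℝ → ℝ → ℝ)
    (hD : ∀ u1 u2 : ℝ, D u1 u2 = Real.exp (2 * u1) + lam ^ 2 * Real.exp (2 * u2))
    (hH1 : ∀ u1 u2 : ℝ, H1 u1 u2 = 8 * lam * Real.exp (u1 - u2) / (3 * D u1 u2))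
    (hH2 : ∀ u1 u2 : ℝ, H2 u1 u2 =
      4 * Real.exp (-2 * u2) *
        (Real.exp (2 * u1) + 3 * lam ^ 2 * Real.exp (2 * u2)) / (3 * D u1 u2))
    (hψ : ∀ u1 u2 : ℝ, ψ u1 u2 = 8 * lam * Real.exp (u1 - u2) / (3 * D u1 u2)) :
    ∀ u1 u2 : ℝ,
      deriv (fun s : ℝ => deriv (fun t : ℝ => ψ t s) u1) u2 =
        (deriv (fun t : ℝ => H1 u1 t) u2 / H1 u1 u2) *
          deriv (fun t : ℝ => ψ t u2) u1 +
        (deriv (fun t : ℝ => H2 t u2) u1 / H2 u1 u2) *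
          deriv (fun t : ℝ => ψ u1 t) u2 := by
  have e_ts : ∀ s x : ℝ, HasDerivAt (fun t => Real.exp (t - s)) (Real.exp (x - s)) x :=
    fun s x => by simpa using ((hasDerivAt_id x).sub_const s).exp
  have e_st : ∀ c x : ℝ, HasDerivAt (fun t => Real.exp (c - t)) (-Real.exp (c - x)) x :=
    fun c x => by simpa using ((hasDerivAt_id x).const_sub c).exp
  have e_2t : ∀ x : ℝ, HasDerivAt (fun t => Real.exp (2 * t)) (2 * Real.exp (2 * x)) x :=
    fun x => by simpa [mul_comm] using ((hasDerivAt_id x).const_mul 2).exp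
  -- ∂ψ/∂u¹
  have hd1 : ∀ a b : ℝ, HasDerivAt (fun t => ψ t b)
      (8 * lam * Real.exp (a - b) * (lam ^ 2 * Real.exp (2 * b) - Real.exp (2 * a)) /
        (3 * (Real.exp (2 * a) + lam ^ 2 * Real.exp (2 * b)) ^ 2)) a := by
    intro a b
    have hfun : (fun t => ψ t b)
        = fun t => 8 * lam * Real.exp (t - b) / (3 * (Real.exp (2 * t) + lam ^ 2 * Real.exp (2 * b))) :=
      funext fun t => by rw [hψ, hD]
    rw [hfun]
    have h := ((e_ts b a).const_mul (8 * lam)).div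
      (((e_2t a).add_const (lam ^ 2 * Real.exp (2 * b))).const_mul 3) (by positivity)
    refine h.congr_deriv ?_
    have hne : (Real.exp (2 * a) + lam ^ 2 * Real.exp (2 * b)) ≠ 0 := by positivity
    field_simp
    ring
  -- ∂ψ/∂u²
  have hd2 : ∀ a b : ℝ, HasDerivAt (fun t => ψ a t)
      (-(8 * lam * Real.exp (a - b) * (Real.exp (2 * a) + 3 * lam ^ 2 * Real.exp (2 * b))) /
        (3 * (Real.exp (2 * a) + lam ^ 2 * Real.exp (2 * b)) ^ 2)) b := by
    intro a b
    have hfun : (fun t => ψ a t)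
        = fun t => 8 * lam * Real.exp (a - t) / (3 * (Real.exp (2 * a) + lam ^ 2 * Real.exp (2 * t))) :=
      funext fun t => by rw [hψ, hD]
    rw [hfun]
    have h := ((e_st a b).const_mul (8 * lam)).div
      ((((e_2t b).const_mul (lam ^ 2)).const_add (Real.exp (2 * a))).const_mul 3) (by positivity)
    refine h.congr_deriv ?_
    have hne : (Real.exp (2 * a) + lam ^ 2 * Real.exp (2 * b)) ≠ 0 := by positivity
    field_simp
    ring
  -- ∂H1/∂u²  (same function as ψ)
  have hdH1 : ∀ a b : ℝ, HasDerivAt (fun t => H1 a t)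
      (-(8 * lam * Real.exp (a - b) * (Real.exp (2 * a) + 3 * lam ^ 2 * Real.exp (2 * b))) /
        (3 * (Real.exp (2 * a) + lam ^ 2 * Real.exp (2 * b)) ^ 2)) b := by
    intro a b
    have hfun : (fun t => H1 a t) = fun t => ψ a t := funext fun t => by rw [hH1, hψ]
    rw [hfun]; exact hd2 a b
  -- ∂H2/∂u¹
  have hdH2 : ∀ a b : ℝ, HasDerivAt (fun t => H2 t b)
      (-(16 * lam ^ 2 * Real.exp (2 * a) * Real.exp (2 * b) * Real.exp (-2 * b)) /
        (3 * (Real.exp (2 * a) + lam ^ 2 * Real.exp (2 * b)) ^ 2)) a := by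
    intro a b
    have hfun : (fun t => H2 t b)
        = fun t => 4 * Real.exp (-2 * b) * (Real.exp (2 * t) + 3 * lam ^ 2 * Real.exp (2 * b)) /
            (3 * (Real.exp (2 * t) + lam ^ 2 * Real.exp (2 * b))) :=
      funext fun t => by rw [hH2, hD]
    rw [hfun]
    have h := (((e_2t a).add_const (3 * lam ^ 2 * Real.exp (2 * b))).const_mul
        (4 * Real.exp (-2 * b))).div
      (((e_2t a).add_const (lam ^ 2 * Real.exp (2 * b))).const_mul 3) (by positivity)
    refine h.congr_deriv ?_
    have hne : (Real.exp (2 * a) + lam ^ 2 * Real.exp (2 * b)) ≠ 0 := by positivity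
    field_simp
    ring
  intro u1 u2
  have hne : (Real.exp (2 * u1) + lam ^ 2 * Real.exp (2 * u2)) ≠ 0 := by positivity
  -- mixed derivative
  have hmix : HasDerivAt
      (fun s => 8 * lam * Real.exp (u1 - s) * (lam ^ 2 * Real.exp (2 * s) - Real.exp (2 * u1)) /
        (3 * (Real.exp (2 * u1) + lam ^ 2 * Real.exp (2 * s)) ^ 2))
      (8 * lam * Real.exp (u1 - u2) *
          (Real.exp (2 * u1) ^ 2 + 6 * lam ^ 2 * Real.exp (2 * u1) * Real.exp (2 * u2)
            - 3 * lam ^ 4 * Real.exp (2 * u2) ^ 2) /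
        (3 * (Real.exp (2 * u1) + lam ^ 2 * Real.exp (2 * u2)) ^ 3)) u2 := by
    have hnum := (((e_st u1 u2).const_mul (8 * lam)).mul
      (((e_2t u2).const_mul (lam ^ 2)).sub_const (Real.exp (2 * u1))))
    have hden := ((((e_2t u2).const_mul (lam ^ 2)).const_add (Real.exp (2 * u1))).pow 2).const_mul 3
    have h := hnum.div hden (by simp only [Pi.pow_apply]; positivity)
    refine h.congr_deriv ?_
    simp only [Pi.mul_apply, Pi.pow_apply, Nat.cast_ofNat]
    field_simp
    ring
  have h1 : (fun s : ℝ => deriv (fun t : ℝ => ψ t s) u1)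
      = fun s => 8 * lam * Real.exp (u1 - s) * (lam ^ 2 * Real.exp (2 * s) - Real.exp (2 * u1)) /
        (3 * (Real.exp (2 * u1) + lam ^ 2 * Real.exp (2 * s)) ^ 2) :=
    funext fun s => (hd1 u1 s).deriv
  rw [h1, hmix.deriv, (hd1 u1 u2).deriv, (hd2 u1 u2).deriv, (hdH1 u1 u2).deriv,
    (hdH2 u1 u2).deriv, hH1, hH2, hD]
  have h2 : (Real.exp (2 * u1) + 3 * lam ^ 2 * Real.exp (2 * u2)) ≠ 0 := by positivity
  have h3 : Real.exp (u1 - u2) ≠ 0 := Real.exp_ne_zero _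
  have h4 : Real.exp (-2 * u2) ≠ 0 := Real.exp_ne_zero _
  field_simp
  ring
end

section
/- Let λ be a nonzero real number and define D(u¹,u²) = e^{2u¹} + λ²e^{2u²}, H₁(u¹,u²) = 8λe^{u¹−u²}/(3D(u¹,u²)), H₂(u¹,u²) = 4e^{−2u²}(e^{2u¹} + 3λ²e^{2u²})/(3D(u¹,u²)), and the coordinate function ψ(u¹,u²) = x²(u¹,u²) = −(2e^{2u¹−2u²} − 6λ²)/(3D(u¹,u²)). Then at every point of ℝ² the second-order linear equation holds: ∂²ψ/∂u¹∂u² = ((∂H₁/∂u²)/H₁)·(∂ψ/∂u¹) + ((∂H₂/∂u¹)/H₂)·(∂ψ/∂u²). -/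
/- STATEMENT 9: the coordinate function ψ = x² of Example 3 satisfies the
second-order linear equation ∂²ψ/∂u¹∂u² = ∂_{u²}(log H₁)·∂_{u¹}ψ +
∂_{u¹}(log H₂)·∂_{u²}ψ. -/
theorem stmt_9 (lam : ℝ) (hlam : lam ≠ 0)
    (D H1 H2 ψ : ℝ → ℝ → ℝ)
    (hD : ∀ u1 u2 : ℝ, D u1 u2 = Real.exp (2 * u1) + lam ^ 2 * Real.exp (2 * u2))
    (hH1 : ∀ u1 u2 : ℝ, H1 u1 u2 = 8 * lam * Real.exp (u1 - u2) / (3 * D u1 u2))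
    (hH2 : ∀ u1 u2 : ℝ, H2 u1 u2 =
      4 * Real.exp (-2 * u2) *
        (Real.exp (2 * u1) + 3 * lam ^ 2 * Real.exp (2 * u2)) / (3 * D u1 u2))
    (hψ : ∀ u1 u2 : ℝ, ψ u1 u2 =
      -(2 * Real.exp (2 * u1 - 2 * u2) - 6 * lam ^ 2) / (3 * D u1 u2)) :
    ∀ u1 u2 : ℝ,
      deriv (fun s : ℝ => deriv (fun t : ℝ => ψ t s) u1) u2 =
        (deriv (fun t : ℝ => H1 u1 t) u2 / H1 u1 u2) *
          deriv (fun t : ℝ => ψ t u2) u1 +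
        (deriv (fun t : ℝ => H2 t u2) u1 / H2 u1 u2) *
          deriv (fun t : ℝ => ψ u1 t) u2 := by
  intro u1 u2
  have l2 : ∀ x : ℝ, HasDerivAt (fun t : ℝ => 2 * t) 2 x := fun x => by
    simpa using (hasDerivAt_id x).const_mul 2
  have exp2 : ∀ x : ℝ, HasDerivAt (fun t : ℝ => Real.exp (2 * t)) (2 * Real.exp (2 * x)) x :=
    fun x => by simpa [mul_comm] using (l2 x).exp
  -- derivative of ψ in the first variable, at any point
  have hd1 : ∀ a b : ℝ, deriv (fun t : ℝ => ψ t b) a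
      = -16 * lam ^ 2 * Real.exp (2 * a)
        / (3 * (Real.exp (2 * a) + lam ^ 2 * Real.exp (2 * b)) ^ 2) := by
    intro a b
    have lin : HasDerivAt (fun t : ℝ => 2 * t - 2 * b) 2 a := (l2 a).sub_const _
    have hnum : HasDerivAt (fun t : ℝ => -(2 * Real.exp (2 * t - 2 * b) - 6 * lam ^ 2))
        (-(2 * (Real.exp (2 * a - 2 * b) * 2))) a :=
      ((lin.exp.const_mul 2).sub_const _).neg
    have hden : HasDerivAt
        (fun t : ℝ => 3 * (Real.exp (2 * t) + lam ^ 2 * Real.exp (2 * b)))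
        (3 * (2 * Real.exp (2 * a))) a := ((exp2 a).add_const _).const_mul 3
    have hne0 : (3 : ℝ) * (Real.exp (2 * a) + lam ^ 2 * Real.exp (2 * b)) ≠ 0 := by positivity
    have hfun : (fun t : ℝ => ψ t b)
        = fun t : ℝ => -(2 * Real.exp (2 * t - 2 * b) - 6 * lam ^ 2)
          / (3 * (Real.exp (2 * t) + lam ^ 2 * Real.exp (2 * b))) :=
      funext fun t => by rw [hψ, hD]
    have hq := (hnum.div hden hne0).deriv
    simp only [Pi.div_def] at hq
    rw [hfun, hq, Real.exp_sub]
    have h1 : Real.exp (2 * a) + lam ^ 2 * Real.exp (2 * b) ≠ 0 := by positivity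
    field_simp
    ring
  -- mixed derivative
  have hfun1 : (fun s : ℝ => deriv (fun t : ℝ => ψ t s) u1)
      = fun s : ℝ => -16 * lam ^ 2 * Real.exp (2 * u1)
        / (3 * (Real.exp (2 * u1) + lam ^ 2 * Real.exp (2 * s)) ^ 2) :=
    funext fun s => hd1 u1 s
  have hbase : HasDerivAt (fun s : ℝ => Real.exp (2 * u1) + lam ^ 2 * Real.exp (2 * s))
      (lam ^ 2 * (2 * Real.exp (2 * u2))) u2 := ((exp2 u2).const_mul (lam ^ 2)).const_add _
  have hdenM := (hbase.pow 2).const_mul 3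
  have hneM : (3 : ℝ) * (Real.exp (2 * u1) + lam ^ 2 * Real.exp (2 * u2)) ^ 2 ≠ 0 := by
    positivity
  have hmix := ((hasDerivAt_const u2 (-16 * lam ^ 2 * Real.exp (2 * u1))).div hdenM hneM).deriv
  -- derivative of ψ in the second variable at (u1,u2)
  have linC : HasDerivAt (fun t : ℝ => 2 * u1 - 2 * t) (-2) u2 := by
    simpa using (l2 u2).const_sub (2 * u1)
  have hnumC : HasDerivAt (fun t : ℝ => -(2 * Real.exp (2 * u1 - 2 * t) - 6 * lam ^ 2))
      (-(2 * (Real.exp (2 * u1 - 2 * u2) * (-2)))) u2 :=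
    ((linC.exp.const_mul 2).sub_const _).neg
  have hdenC : HasDerivAt
      (fun t : ℝ => 3 * (Real.exp (2 * u1) + lam ^ 2 * Real.exp (2 * t)))
      (3 * (lam ^ 2 * (2 * Real.exp (2 * u2)))) u2 :=
    (((exp2 u2).const_mul (lam ^ 2)).const_add _).const_mul 3
  have hneC : (3 : ℝ) * (Real.exp (2 * u1) + lam ^ 2 * Real.exp (2 * u2)) ≠ 0 := by positivity
  have hfunC : (fun t : ℝ => ψ u1 t)
      = fun t : ℝ => -(2 * Real.exp (2 * u1 - 2 * t) - 6 * lam ^ 2)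
        / (3 * (Real.exp (2 * u1) + lam ^ 2 * Real.exp (2 * t))) :=
    funext fun t => by rw [hψ, hD]
  have hC := (hnumC.div hdenC hneC).deriv
  -- derivative of H1 in the second variable
  have linH1 : HasDerivAt (fun t : ℝ => u1 - t) (-1) u2 := by
    simpa using (hasDerivAt_id u2).const_sub u1
  have hnumH1 : HasDerivAt (fun t : ℝ => 8 * lam * Real.exp (u1 - t))
      (8 * lam * (Real.exp (u1 - u2) * (-1))) u2 := linH1.exp.const_mul (8 * lam)
  have hfunH1 : (fun t : ℝ => H1 u1 t)
      = fun t : ℝ => 8 * lam * Real.exp (u1 - t)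
        / (3 * (Real.exp (2 * u1) + lam ^ 2 * Real.exp (2 * t))) :=
    funext fun t => by rw [hH1, hD]
  have hH1d := (hnumH1.div hdenC hneC).deriv
  -- derivative of H2 in the first variable
  have hnumH2 : HasDerivAt
      (fun t : ℝ => 4 * Real.exp (-2 * u2) * (Real.exp (2 * t) + 3 * lam ^ 2 * Real.exp (2 * u2)))
      (4 * Real.exp (-2 * u2) * (2 * Real.exp (2 * u1))) u1 :=
    ((exp2 u1).add_const _).const_mul (4 * Real.exp (-2 * u2))
  have hdenH2 : HasDerivAt
      (fun t : ℝ => 3 * (Real.exp (2 * t) + lam ^ 2 * Real.exp (2 * u2)))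
      (3 * (2 * Real.exp (2 * u1))) u1 := ((exp2 u1).add_const _).const_mul 3
  have hneH2 : (3 : ℝ) * (Real.exp (2 * u1) + lam ^ 2 * Real.exp (2 * u2)) ≠ 0 := by positivity
  have hfunH2 : (fun t : ℝ => H2 t u2)
      = fun t : ℝ => 4 * Real.exp (-2 * u2) * (Real.exp (2 * t) + 3 * lam ^ 2 * Real.exp (2 * u2))
        / (3 * (Real.exp (2 * t) + lam ^ 2 * Real.exp (2 * u2))) :=
    funext fun t => by rw [hH2, hD]
  have hH2d := (hnumH2.div hdenH2 hneH2).deriv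
  simp only [Pi.div_def, Pi.pow_apply] at hmix hC hH1d hH2d
  rw [hfun1, hmix, hd1 u1 u2, hfunC, hC, hfunH1, hH1d, hfunH2, hH2d, hH1, hH2, hD]
  have hX : Real.exp u1 ≠ 0 := Real.exp_ne_zero _
  have hY : Real.exp u2 ≠ 0 := Real.exp_ne_zero _
  have hD1 : Real.exp u1 * Real.exp u1 + lam ^ 2 * (Real.exp u2 * Real.exp u2) ≠ 0 := by
    positivity
  have hD3 : Real.exp u1 * Real.exp u1 + 3 * lam ^ 2 * (Real.exp u2 * Real.exp u2) ≠ 0 := by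
    positivity
  simp only [Real.exp_sub, neg_mul, Real.exp_neg, two_mul, Real.exp_add, Nat.cast_ofNat,
    pow_one]
  field_simp
  ring
end
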